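/- (Expected number of escaping demands per capture, in the worst-case vehicle position.) Let λ > 0, v > 0, W > 0 and set α := λW/2. Then (λ²/(v³W²)) ∫₀^{vW} (yW − y²/(2v)) · y · e^{−λ y²/(2v²W)} dy + (λW/2) e^{−λW/2} = √(πα)·erf(√α) + e^{−α} − 1. -/

import Mathlib

/-! After writing `λ = 2 s² v² W`, so that `√α = s v W`, the substitution `t = s y` turns the
integral into a combination of the truncated Gaussian moments `∫₀^√α t² e^{−t²} dt` and
`∫₀^√α t³ e^{−t²} dt`. The cubic moment is elementary, and integrating the quadratic one by parts
leaves `∫₀^√α e^{−t²} dt = (√π/2) erf √α`; the remaining terms cancel algebraically. -/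

noncomputable def erf (x : ℝ) : ℝ :=
  (2 / Real.sqrt Real.pi) * ∫ t in (0:ℝ)..x, Real.exp (-t ^ 2)

open Real intervalIntegral

theorem hasDerivAt_integral_exp_neg_sq (x : ℝ) :
    HasDerivAt (fun u => ∫ t in (0:ℝ)..u, exp (-t ^ 2)) (exp (-x ^ 2)) x :=
  have h : Continuous fun t : ℝ => exp (-t ^ 2) := by fun_prop
  integral_hasDerivAt_right (h.intervalIntegrable _ _) (h.stronglyMeasurableAtFilter _ _)
    h.continuousAt

theorem hasDerivAt_exp_neg_sq (x : ℝ) :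
    HasDerivAt (fun t => exp (-t ^ 2)) (-2 * x * exp (-x ^ 2)) x := by
  simpa [mul_comm, mul_assoc] using ((hasDerivAt_pow 2 x).neg).exp

theorem integral_sq_mul_exp_neg_sq (a : ℝ) :
    ∫ t in (0:ℝ)..a, t ^ 2 * exp (-t ^ 2)
      = ((∫ t in (0:ℝ)..a, exp (-t ^ 2)) - a * exp (-a ^ 2)) / 2 := by
  have hF : ∀ x, HasDerivAt (fun u => ((∫ t in (0:ℝ)..u, exp (-t ^ 2)) - u * exp (-u ^ 2)) / 2)
      (x ^ 2 * exp (-x ^ 2)) x := fun x => by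
    refine (((hasDerivAt_integral_exp_neg_sq x).sub
      ((hasDerivAt_id x).mul (hasDerivAt_exp_neg_sq x))).div_const 2).congr_deriv ?_
    simp only [id]; ring
  rw [integral_eq_sub_of_hasDerivAt (fun x _ => hF x)
    ((by fun_prop : Continuous _).intervalIntegrable _ _)]
  simp

theorem integral_pow_three_mul_exp_neg_sq (a : ℝ) :
    ∫ t in (0:ℝ)..a, t ^ 3 * exp (-t ^ 2) = (1 - (1 + a ^ 2) * exp (-a ^ 2)) / 2 := by
  have hF : ∀ x, HasDerivAt (fun u => -((1 + u ^ 2) * exp (-u ^ 2)) / 2)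
      (x ^ 3 * exp (-x ^ 2)) x := fun x => by
    refine ((((hasDerivAt_pow 2 x).const_add 1).mul (hasDerivAt_exp_neg_sq x)).neg.div_const
      2).congr_deriv ?_
    push_cast; ring
  rw [integral_eq_sub_of_hasDerivAt (fun x _ => hF x)
    ((by fun_prop : Continuous _).intervalIntegrable _ _)]
  simp; ring

theorem integral_pow_mul_exp_neg_mul_sq (n : ℕ) {c : ℝ} (hc : 0 < c) (b : ℝ) :
    ∫ y in (0:ℝ)..b, y ^ n * exp (-(c * y ^ 2))
      = (√c ^ (n + 1))⁻¹ * ∫ t in (0:ℝ)..√c * b, t ^ n * exp (-t ^ 2) := by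
  have hs : √c ≠ 0 := (sqrt_pos.2 hc).ne'
  have h := integral_comp_mul_left (fun t => t ^ n * exp (-t ^ 2)) (a := 0) (b := b) hs
  simp only [mul_zero, smul_eq_mul, mul_pow, sq_sqrt hc.le] at h
  rw [pow_succ, mul_inv, mul_assoc, ← h, ← integral_const_mul]
  congr 1 with y
  field_simp

/-- Expected number of escaping demands per capture, in the
worst-case vehicle position: with `α = λW/2`,
`(λ²/(v³W²)) ∫₀^{vW} (yW − y²/(2v)) y e^{−λy²/(2v²W)} dy + (λW/2)e^{−λW/2}
  = √(πα)·erf(√α) + e^{−α} − 1`. -/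
theorem stmt11 (lam v W α : ℝ) (hlam : 0 < lam) (hv : 0 < v) (hW : 0 < W)
    (hα : α = lam * W / 2) :
    (lam ^ 2 / (v ^ 3 * W ^ 2)) *
        (∫ y in (0:ℝ)..(v * W),
          (y * W - y ^ 2 / (2 * v)) * y * Real.exp (-lam * y ^ 2 / (2 * v ^ 2 * W)))
      + (lam * W / 2) * Real.exp (-(lam * W) / 2)
      = Real.sqrt (Real.pi * α) * erf (Real.sqrt α) + Real.exp (-α) - 1 := by
  obtain ⟨s, hs, rfl⟩ : ∃ s > 0, lam = 2 * s ^ 2 * v ^ 2 * W :=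
    ⟨√(lam / (2 * v ^ 2 * W)), by positivity, by rw [sq_sqrt (by positivity)]; field_simp⟩
  have hα_sqrt : √α = s * (v * W) := by
    rw [← sqrt_sq (by positivity : 0 ≤ s * (v * W)), hα]
    ring_nf
  have hsplit : (fun y => (y * W - y ^ 2 / (2 * v)) * y
        * exp (-(2 * s ^ 2 * v ^ 2 * W) * y ^ 2 / (2 * v ^ 2 * W)))
      = fun y => W * (y ^ 2 * exp (-(s ^ 2 * y ^ 2)))
          - (2 * v)⁻¹ * (y ^ 3 * exp (-(s ^ 2 * y ^ 2))) := by
    ext y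
    field_simp
  rw [hsplit, integral_sub ((by fun_prop : Continuous _).intervalIntegrable _ _)
      ((by fun_prop : Continuous _).intervalIntegrable _ _),
    integral_const_mul, integral_const_mul, integral_pow_mul_exp_neg_mul_sq 2 (by positivity),
    integral_pow_mul_exp_neg_mul_sq 3 (by positivity), sqrt_sq hs.le,
    integral_sq_mul_exp_neg_sq, integral_pow_three_mul_exp_neg_sq, erf, sqrt_mul pi_pos.le,
    hα_sqrt, hα]
  have hπ : √π ≠ 0 := (sqrt_pos.2 pi_pos).ne'
  field_simp
  ring_nf
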